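/- Let V be a finite set and E : V → V → Prop a directed edge relation that is acyclic (no walk of positive length from any vertex to itself). Define the coverage generating function P_{f,g}(p) = ∑_{n} N_n(f,g)·pⁿ (a finite sum, since in a finite acyclic graph N_n vanishes for large n). Then for all f, h, g ∈ V and all p ∈ [0,1], P_{f,g}(p) ≥ P_{f,h}(p) · P_{h,g}(p). -/

import Mathlib

open scoped BigOperators

/-- A walk of length `n` from `f` to `g` in the directed graph `(V, E)`:
a function `w : Fin (n+1) → V` with `w 0 = f`, `w n = g`, and
`E (w i) (w (i+1))` for all `i < n`. -/
def IsWalk {V : Type*} (E : V → V → Prop) (n : ℕ) (f g : V)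
    (w : Fin (n + 1) → V) : Prop :=
  w 0 = f ∧ w (Fin.last n) = g ∧ ∀ i : Fin n, E (w i.castSucc) (w i.succ)

/-- `N_n(f,g)`: the number of walks of length `n` from `f` to `g`. -/
noncomputable def numWalks {V : Type*} (E : V → V → Prop) (n : ℕ) (f g : V) : ℕ :=
  Nat.card {w : Fin (n + 1) → V // IsWalk E n f g w}

/-- The coverage generating function `P_{f,g}(p) = ∑ₙ N_n(f,g) pⁿ`. -/
noncomputable def covGF {V : Type*} (E : V → V → Prop) (f g : V) (p : ℝ) : ℝ :=
  ∑' n : ℕ, (numWalks E n f g : ℝ) * p ^ n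

/-- The edge relation is acyclic: no walks of positive length from a vertex to itself. -/
def Acyclic {V : Type*} (E : V → V → Prop) : Prop :=
  ∀ f : V, ∀ n : ℕ, 1 ≤ n → numWalks E n f f = 0

/-!
In an acyclic graph every walk is injective, since a repeated vertex would cut out a closed walk;
hence walks have length less than `|V|` and all the series are finite sums. Appending a walk
`f → h` of length `i` to a walk `h → g` of length `N - i` gives a walk `f → g` of length `N`
that visits `h` at time `i`. As `h` is visited at most once, these walks are distinct for
different `i`, so `∑_{i+j=N} N_i(f,h) N_j(h,g) ≤ N_N(f,g)`. Multiplying by `p^N ≥ 0` and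
summing, the Cauchy product of the two series is dominated termwise by the third.
-/

open Finset

section

variable {V : Type*} {E : V → V → Prop}

namespace IsWalk

variable {n : ℕ} {f g : V} {w : Fin (n + 1) → V}

lemma segment (hw : IsWalk E n f g w) {a b : ℕ} (hab : a ≤ b) (hb : b ≤ n) :
    IsWalk E (b - a) (w ⟨a, by omega⟩) (w ⟨b, by omega⟩)
      (fun k => w ⟨a + k, by omega⟩) :=
  ⟨rfl, by simp [Nat.add_sub_cancel' hab], fun ⟨k, _⟩ => hw.2.2 ⟨a + k, by omega⟩⟩

end IsWalk

lemma numWalks_pos [Finite V] {n : ℕ} {f g : V} {w : Fin (n + 1) → V} (hw : IsWalk E n f g w) :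
    0 < numWalks E n f g :=
  have : Nonempty {w // IsWalk E n f g w} := ⟨⟨w, hw⟩⟩
  Nat.card_pos

namespace Acyclic

variable [Finite V]

theorem injective_of_isWalk (hE : Acyclic E) {n : ℕ} {f g : V} {w : Fin (n + 1) → V}
    (hw : IsWalk E n f g w) : Function.Injective w := by
  intro a b hab
  by_contra hne
  wlog hlt : a < b generalizing a b
  · exact this hab.symm (Ne.symm hne) (lt_of_le_of_ne (not_lt.1 hlt) (Ne.symm hne))
  have hloop := hw.segment hlt.le (Nat.le_of_lt_succ b.2)
  simp only [Fin.eta, hab] at hloop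
  exact (numWalks_pos hloop).ne' (hE _ _ (by omega))

end Acyclic

theorem Acyclic.numWalks_eq_zero_of_card_le [Fintype V] (hE : Acyclic E) {n : ℕ}
    (hn : Fintype.card V ≤ n) (f g : V) : numWalks E n f g = 0 := by
  by_contra hne
  obtain ⟨⟨w, hw⟩⟩ := (Nat.card_ne_zero.1 hne).1
  have := Fintype.card_le_of_injective w (hE.injective_of_isWalk hw)
  simp only [Fintype.card_fin] at this
  omega

-- Only meaningful when `i ≤ N` (truncated `N - i`) and `u` ends where `v` starts.
def walkAppend {i : ℕ} (N : ℕ) (u : Fin (i + 1) → V) (v : Fin (N - i + 1) → V) :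
    Fin (N + 1) → V :=
  fun k => if hk : (k : ℕ) ≤ i then u ⟨k, by omega⟩ else v ⟨k - i, by omega⟩

section walkAppend

variable {i N : ℕ} {u : Fin (i + 1) → V} {v : Fin (N - i + 1) → V}

lemma walkAppend_apply_left {k : ℕ} (hk : k ≤ i) (hkN : k < N + 1) :
    walkAppend N u v ⟨k, hkN⟩ = u ⟨k, by omega⟩ :=
  dif_pos hk

lemma walkAppend_apply_right (huv : u (Fin.last i) = v 0) {k : ℕ} (hk : k ≤ N - i)
    (hkN : i + k < N + 1) :
    walkAppend N u v ⟨i + k, hkN⟩ = v ⟨k, by omega⟩ := by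
  rcases Nat.eq_zero_or_pos k with rfl | hk0
  · exact (dif_pos le_rfl).trans huv
  · exact (dif_neg (by simp only; omega)).trans (by congr 2; exact Nat.add_sub_cancel_left i k)

lemma IsWalk.append {f h g : V} (hiN : i ≤ N) (hu : IsWalk E i f h u)
    (hv : IsWalk E (N - i) h g v) :
    IsWalk E N f g (walkAppend N u v) := by
  have huv : u (Fin.last i) = v 0 := hu.2.1.trans hv.1.symm
  refine ⟨(walkAppend_apply_left (Nat.zero_le i) _).trans hu.1, ?_, fun ⟨k, hk⟩ => ?_⟩
  · rw [show Fin.last N = ⟨i + (N - i), by omega⟩ from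
      Fin.ext (by simp only [Fin.val_last]; omega)]
    exact (walkAppend_apply_right huv le_rfl _).trans hv.2.1
  rcases lt_or_ge k i with hki | hik
  · show E (walkAppend N u v ⟨k, _⟩) (walkAppend N u v ⟨k + 1, _⟩)
    rw [walkAppend_apply_left hki.le, walkAppend_apply_left hki]
    exact hu.2.2 ⟨k, hki⟩
  · obtain ⟨d, rfl⟩ := Nat.exists_eq_add_of_le hik
    show E (walkAppend N u v ⟨i + d, _⟩) (walkAppend N u v ⟨i + (d + 1), _⟩)
    rw [walkAppend_apply_right huv (by omega), walkAppend_apply_right huv (by omega)]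
    exact hv.2.2 ⟨d, by omega⟩

end walkAppend

section Counting

variable [Fintype V]

open Classical

lemma numWalks_eq_card (n : ℕ) (f g : V) :
    numWalks E n f g = #{w : Fin (n + 1) → V | IsWalk E n f g w} := by
  rw [numWalks, Nat.card_eq_fintype_card, Fintype.card_subtype]

lemma numWalks_mul_numWalks_le_card_visiting (N : ℕ) (k : Fin (N + 1)) (f h g : V) :
    numWalks E k f h * numWalks E (N - k) h g ≤
      #{w : Fin (N + 1) → V | IsWalk E N f g w ∧ w k = h} := by
  rw [numWalks_eq_card, numWalks_eq_card, ← card_product]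
  refine card_le_card_of_injOn (fun x => walkAppend N x.1 x.2) ?_ ?_
  · rintro ⟨u, v⟩ huv
    simp only [coe_product, coe_filter, mem_univ, true_and, Set.mem_prod, Set.mem_ofPred_eq]
      at huv ⊢
    exact ⟨huv.1.append (by omega) huv.2, (walkAppend_apply_left le_rfl k.2).trans huv.1.2.1⟩
  · rintro ⟨u, v⟩ huv ⟨u', v'⟩ hu'v' (happ : walkAppend N u v = walkAppend N u' v')
    simp only [coe_product, coe_filter, mem_univ, true_and, Set.mem_prod, Set.mem_ofPred_eq]
      at huv hu'v'
    have huv0 : u (Fin.last k) = v 0 := huv.1.2.1.trans huv.2.1.symm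
    have hu'v'0 : u' (Fin.last k) = v' 0 := hu'v'.1.2.1.trans hu'v'.2.1.symm
    refine Prod.ext (funext fun j => ?_) (funext fun j => ?_)
    · have hj := congrFun happ ⟨j, by omega⟩
      rwa [walkAppend_apply_left (Nat.le_of_lt_succ j.2),
        walkAppend_apply_left (Nat.le_of_lt_succ j.2)] at hj
    · have hj := congrFun happ ⟨k + j, by omega⟩
      rwa [walkAppend_apply_right huv0 (Nat.le_of_lt_succ j.2),
        walkAppend_apply_right hu'v'0 (Nat.le_of_lt_succ j.2)] at hj

theorem Acyclic.sum_card_visiting_le (hE : Acyclic E) (N : ℕ) (f h g : V) :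
    ∑ k : Fin (N + 1), #{w : Fin (N + 1) → V | IsWalk E N f g w ∧ w k = h} ≤
      numWalks E N f g := by
  rw [numWalks_eq_card, ← card_biUnion]
  · exact card_le_card (biUnion_subset.2 fun k _ => monotone_filter_right _ fun _ _ hw => hw.1)
  · intro k _ k' _ hne
    exact disjoint_filter.2 fun w _ ⟨hw, hk⟩ ⟨_, hk'⟩ =>
      hne (hE.injective_of_isWalk hw (hk.trans hk'.symm))

end Counting

namespace Acyclic

variable [Fintype V]

theorem sum_antidiagonal_numWalks_mul_le (hE : Acyclic E) (N : ℕ) (f h g : V) :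
    ∑ x ∈ antidiagonal N, numWalks E x.1 f h * numWalks E x.2 h g ≤ numWalks E N f g := by
  rw [Nat.sum_antidiagonal_eq_sum_range_succ_mk, ← Fin.sum_univ_eq_sum_range]
  exact (sum_le_sum fun k _ => numWalks_mul_numWalks_le_card_visiting N k f h g).trans
    (hE.sum_card_visiting_le N f h g)

theorem sum_antidiagonal_numWalks_mul_pow_le (hE : Acyclic E) {p : ℝ} (hp : 0 ≤ p) (N : ℕ)
    (f h g : V) :
    ∑ x ∈ antidiagonal N, (numWalks E x.1 f h * p ^ x.1) * (numWalks E x.2 h g * p ^ x.2) ≤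
      numWalks E N f g * p ^ N :=
  calc _ = ((∑ x ∈ antidiagonal N, numWalks E x.1 f h * numWalks E x.2 h g : ℕ) : ℝ) *
        p ^ N := by
        push_cast
        rw [sum_mul]
        refine sum_congr rfl fun x hx => ?_
        rw [← mem_antidiagonal.1 hx, pow_add]
        ring
    _ ≤ _ := by
        gcongr
        exact_mod_cast hE.sum_antidiagonal_numWalks_mul_le N f h g

theorem summable_numWalks_mul_pow (hE : Acyclic E) (f g : V) (p : ℝ) :
    Summable fun n => (numWalks E n f g : ℝ) * p ^ n :=
  summable_of_ne_finset_zero (s := range (Fintype.card V)) fun n hn => by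
    rw [hE.numWalks_eq_zero_of_card_le (not_lt.1 (mem_range.not.1 hn)), Nat.cast_zero, zero_mul]

end Acyclic

end

/-- for an acyclic edge relation on a finite set,
`P_{f,g}(p) ≥ P_{f,h}(p) · P_{h,g}(p)` for all `p ∈ [0,1]`. -/
theorem stmt_2 {V : Type*} [Fintype V] (E : V → V → Prop) (hE : Acyclic E)
    (f h g : V) (p : ℝ) (hp : p ∈ Set.Icc (0 : ℝ) 1) :
    covGF E f h p * covGF E h g p ≤ covGF E f g p := by
  obtain ⟨hp0, -⟩ := hp
  have hsum (a b : V) := hE.summable_numWalks_mul_pow a b p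
  have hmul := hE.sum_antidiagonal_numWalks_mul_pow_le hp0 (f := f) (h := h) (g := g)
  rw [covGF, covGF, covGF, tsum_mul_tsum_eq_tsum_sum_antidiagonal_of_summable_norm
    (by simpa only [Real.norm_eq_abs] using (hsum f h).abs)
    (by simpa only [Real.norm_eq_abs] using (hsum h g).abs)]
  have hnonneg (N : ℕ) : 0 ≤ ∑ x ∈ antidiagonal N,
      (numWalks E x.1 f h * p ^ x.1) * (numWalks E x.2 h g * p ^ x.2) :=
    sum_nonneg fun x _ => by positivity
  exact Summable.tsum_le_tsum hmul (.of_nonneg_of_le hnonneg hmul (hsum f g)) (hsum f g)
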